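/- arXiv:2105.02562 — 3 statements merged into one kernel-verified Lean document; each statement's English description precedes it below -/
import Mathlib

section
/- For the n-dimensional realisation J₊ = (|p|² + Σⱼ aⱼ/xⱼ²)/2, J₋ = |x|²/2, J₃ = (x·p)/2, the Casimir J₃² − J₊J₋ equals −(1/4)(Σ_{1≤i<j≤n} L_{ij}² + |x|² Σⱼ aⱼ/xⱼ²), where L_{ij} = x_i p_j − x_j p_i. -/
open Finset

theorem stmt3 (n : ℕ) (a : Fin n → ℝ) (x p : Fin n → ℝ) (hx : ∀ j, x j ≠ 0) :
    ((∑ j, x j * p j) / 2) ^ 2 -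
      ((∑ j, (p j) ^ 2) + ∑ j, a j / (x j) ^ 2) / 2 * ((∑ j, (x j) ^ 2) / 2)
    = -(1 / 4) * ((∑ i, ∑ j, if i < j then (x i * p j - x j * p i) ^ 2 else 0)
        + (∑ j, (x j) ^ 2) * ∑ j, a j / (x j) ^ 2) := by
  have hfull : ∑ i, ∑ j, (x i * p j - x j * p i) ^ 2
      = 2 * ((∑ j, (x j) ^ 2) * (∑ j, (p j) ^ 2) - (∑ j, x j * p j) ^ 2) := by
    have h : ∀ i j : Fin n, (x i * p j - x j * p i) ^ 2
        = x i ^ 2 * p j ^ 2 + x j ^ 2 * p i ^ 2 - 2 * ((x i * p i) * (x j * p j)) := by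
      intro i j; ring
    simp only [h, Finset.sum_sub_distrib, Finset.sum_add_distrib, ← Finset.mul_sum,
      ← Finset.sum_mul]
    ring
  have hsymm : (∑ i, ∑ j, if i < j then (x i * p j - x j * p i) ^ 2 else 0)
      = (∑ i, ∑ j, if j < i then (x i * p j - x j * p i) ^ 2 else 0) := by
    rw [Finset.sum_comm]
    apply Finset.sum_congr rfl; intro i _
    apply Finset.sum_congr rfl; intro j _
    congr 1
    ring
  have hhalf : ∑ i, ∑ j, (x i * p j - x j * p i) ^ 2
      = 2 * (∑ i, ∑ j, if i < j then (x i * p j - x j * p i) ^ 2 else 0) := by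
    have : ∀ i j : Fin n, (x i * p j - x j * p i) ^ 2
        = (if i < j then (x i * p j - x j * p i) ^ 2 else 0)
          + (if j < i then (x i * p j - x j * p i) ^ 2 else 0) := by
      intro i j
      rcases lt_trichotomy i j with h | h | h
      · simp [h, not_lt_of_gt h]
      · simp [h]
      · simp [h, not_lt_of_gt h]
    have h2 : ∑ i, ∑ j, (x i * p j - x j * p i) ^ 2
        = ∑ i, ∑ j, ((if i < j then (x i * p j - x j * p i) ^ 2 else 0)
          + (if j < i then (x i * p j - x j * p i) ^ 2 else 0)) := by
      exact Finset.sum_congr rfl fun i _ => Finset.sum_congr rfl fun j _ => this i j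
    rw [h2]
    simp only [Finset.sum_add_distrib]
    rw [← hsymm]; ring
  have key : (∑ i, ∑ j, if i < j then (x i * p j - x j * p i) ^ 2 else 0)
      = (∑ j, (x j) ^ 2) * (∑ j, (p j) ^ 2) - (∑ j, x j * p j) ^ 2 := by
    have := hhalf.symm.trans hfull
    linarith
  rw [key]; ring
end

section
/- Each left Casimir C^[m] (for m = 2,…,n) Poisson commutes with each of the n-dimensional sl(2,ℝ) generators J₊ = (|p|² + Σⱼ aⱼ/xⱼ²)/2, J₋ = |x|²/2, J₃ = (x·p)/2: {C^[m], J₊} = {C^[m], J₋} = {C^[m], J₃} = 0. -/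
/-!
Up to the factor `-1/4` and an additive constant, `C^[m]` is the sum over pairs `i < k < m` of
the two-body Casimirs `L_ik² + a_i x_k²/x_i² + a_k x_i²/x_k²`. The Poisson bracket is linear in
its first argument, so it suffices that each two-body Casimir commutes with `J₊`, `J₋`, `J₃`.
A two-body Casimir depends only on `x_i, x_k, p_i, p_k`, so this is a computation with its four
nonzero partial derivatives.
-/

open Finset

/-- Canonical Poisson bracket on the phase space ℝ²ⁿ. -/
noncomputable def pb (n : ℕ) (f g : (Fin n → ℝ) → (Fin n → ℝ) → ℝ)
    (x p : Fin n → ℝ) : ℝ :=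
  ∑ j, (deriv (fun t => f (Function.update x j t) p) (x j) *
        deriv (fun t => g x (Function.update p j t)) (p j) -
        deriv (fun t => f x (Function.update p j t)) (p j) *
        deriv (fun t => g (Function.update x j t) p) (x j))

/-- The left Casimir `C^[m]` of the sl(2) coalgebra in the given realisation. -/
noncomputable def CL (n : ℕ) (a : Fin n → ℝ) (m : ℕ)
    (x p : Fin n → ℝ) : ℝ :=
  -(1 / 4) * ((∑ i : Fin n, ∑ j : Fin n, if i < j ∧ (j : ℕ) < m then
      (x i * p j - x j * p i) ^ 2 + a i * (x j) ^ 2 / (x i) ^ 2 +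
        a j * (x i) ^ 2 / (x j) ^ 2 else 0)
    + ∑ i : Fin n, if (i : ℕ) < m then a i else 0)

open Function

section PoissonBracket

variable {n : ℕ}

def HasPartialDerivs (f : (Fin n → ℝ) → (Fin n → ℝ) → ℝ) (x p fx fp : Fin n → ℝ) : Prop :=
  ∀ j, HasDerivAt (fun t => f (update x j t) p) (fx j) (x j) ∧
    HasDerivAt (fun t => f x (update p j t)) (fp j) (p j)

variable {f g : (Fin n → ℝ) → (Fin n → ℝ) → ℝ} {x p fx fp gx gp : Fin n → ℝ}

theorem HasPartialDerivs.pb_eq (hf : HasPartialDerivs f x p fx fp)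
    (hg : HasPartialDerivs g x p gx gp) :
    pb n f g x p = ∑ j, (fx j * gp j - fp j * gx j) := by
  refine sum_congr rfl fun j _ => ?_
  rw [(hf j).1.deriv, (hf j).2.deriv, (hg j).1.deriv, (hg j).2.deriv]

theorem pb_sum_left {ι : Type*} (s : Finset ι) {F : ι → (Fin n → ℝ) → (Fin n → ℝ) → ℝ}
    {Fx Fp : ι → Fin n → ℝ} (hF : ∀ i ∈ s, HasPartialDerivs (F i) x p (Fx i) (Fp i)) :
    pb n (fun x p => ∑ i ∈ s, F i x p) g x p = ∑ i ∈ s, pb n (F i) g x p := by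
  simp only [pb]
  rw [sum_comm]
  refine sum_congr rfl fun j _ => ?_
  rw [(HasDerivAt.fun_sum fun i hi => (hF i hi j).1).deriv,
    (HasDerivAt.fun_sum fun i hi => (hF i hi j).2).deriv, sum_mul, sum_mul,
    ← sum_sub_distrib]
  refine sum_congr rfl fun i hi => ?_
  rw [(hF i hi j).1.deriv, (hF i hi j).2.deriv]

theorem pb_const_mul_add_const_left (c d : ℝ) :
    pb n (fun x p => c * (f x p + d)) g x p = c * pb n f g x p := by
  simp only [pb, deriv_const_mul_field, deriv_add_const, mul_sum]
  exact sum_congr rfl fun j _ => by ring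

end PoissonBracket

theorem hasDerivAt_update_apply {ι : Type*} [DecidableEq ι] (x : ι → ℝ) (j l : ι) :
    HasDerivAt (fun t => update x j t l) ((Pi.single j 1 : ι → ℝ) l) (x j) :=
  hasDerivAt_pi.1 (hasDerivAt_update x j (x j)) l

theorem hasDerivAt_sum_update {ι : Type*} [Fintype ι] [DecidableEq ι] {φ : ι → ℝ → ℝ}
    {x : ι → ℝ} {j : ι} {d : ℝ} (h : HasDerivAt (φ j) d (x j)) :
    HasDerivAt (fun t => ∑ l, φ l (update x j t l)) d (x j) := by
  have hsplit : (fun t => ∑ l, φ l (update x j t l)) =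
      fun t => φ j t + ∑ l ∈ univ.erase j, φ l (x l) := by
    funext t
    rw [← add_sum_erase _ _ (mem_univ j), update_self]
    congr 1
    refine sum_congr rfl fun l hl => ?_
    rw [update_of_ne (ne_of_mem_erase hl)]
  rw [hsplit]
  exact h.add_const _

section PairTerm

variable {n : ℕ} (a : Fin n → ℝ) {x p : Fin n → ℝ} {i k : Fin n}

def angularMomentum (x p : Fin n → ℝ) (i k : Fin n) : ℝ := x i * p k - x k * p i

noncomputable def pairCasimir (i k : Fin n) (x p : Fin n → ℝ) : ℝ :=
  angularMomentum x p i k ^ 2 + a i * x k ^ 2 / x i ^ 2 + a k * x i ^ 2 / x k ^ 2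

theorem hasPartialDerivs_pairCasimir (hik : i ≠ k) (hi : x i ≠ 0) (hk : x k ≠ 0) :
    HasPartialDerivs (pairCasimir a i k) x p
      ((Pi.single i (2 * angularMomentum x p i k * p k - 2 * a i * x k ^ 2 / x i ^ 3
          + 2 * a k * x i / x k ^ 2) : Fin n → ℝ) +
        (Pi.single k (-(2 * angularMomentum x p i k * p i) + 2 * a i * x k / x i ^ 2
          - 2 * a k * x i ^ 2 / x k ^ 3) : Fin n → ℝ))
      ((Pi.single i (-(2 * angularMomentum x p i k * x k)) : Fin n → ℝ) +
        Pi.single k (2 * angularMomentum x p i k * x i)) := by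
  intro j
  have hxi := hasDerivAt_update_apply x j i
  have hxk := hasDerivAt_update_apply x j k
  have hpi := hasDerivAt_update_apply p j i
  have hpk := hasDerivAt_update_apply p j k
  have hx := ((((hxi.mul_const (p k)).sub (hxk.mul_const (p i))).pow 2).add
    (((hxk.pow 2).const_mul (a i)).div (hxi.pow 2) (by simpa using pow_ne_zero 2 hi))).add
    (((hxi.pow 2).const_mul (a k)).div (hxk.pow 2) (by simpa using pow_ne_zero 2 hk))
  have hp := ((((hpk.const_mul (x i)).sub (hpi.const_mul (x k))).pow 2).add_const
    (a i * x k ^ 2 / x i ^ 2)).add_const (a k * x i ^ 2 / x k ^ 2)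
  rcases eq_or_ne j i with rfl | hji
  · refine ⟨hx.congr_deriv ?_, hp.congr_deriv ?_⟩ <;>
      simp only [update_eq_self, Pi.add_apply, Pi.sub_apply, Pi.pow_apply, Pi.single_eq_same,
        Pi.single_eq_of_ne' hik, Pi.single_eq_of_ne hik, angularMomentum] <;> field_simp <;> ring
  rcases eq_or_ne j k with rfl | hjk
  · refine ⟨hx.congr_deriv ?_, hp.congr_deriv ?_⟩ <;>
      simp only [update_eq_self, Pi.add_apply, Pi.sub_apply, Pi.pow_apply, Pi.single_eq_same,
        Pi.single_eq_of_ne' hji, Pi.single_eq_of_ne hji, angularMomentum] <;> field_simp <;> ring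
  · refine ⟨hx.congr_deriv ?_, hp.congr_deriv ?_⟩ <;>
      simp [hji, hjk, hji.symm, hjk.symm]

end PairTerm

section Generators

variable {n : ℕ} (a : Fin n → ℝ) {x p : Fin n → ℝ}

noncomputable def sl2Plus (x p : Fin n → ℝ) : ℝ := ((∑ j, p j ^ 2) + ∑ j, a j / x j ^ 2) / 2

noncomputable def sl2Minus (x _ : Fin n → ℝ) : ℝ := (∑ j, x j ^ 2) / 2

noncomputable def sl2Three (x p : Fin n → ℝ) : ℝ := (∑ j, x j * p j) / 2

theorem hasPartialDerivs_sl2Plus (hx : ∀ j, x j ≠ 0) :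
    HasPartialDerivs (sl2Plus a) x p (fun j => -(a j / x j ^ 3)) p := by
  intro j
  constructor
  · have h := (hasDerivAt_const (x j) (a j)).div (hasDerivAt_pow 2 (x j)) (pow_ne_zero 2 (hx j))
    refine ((hasDerivAt_sum_update (φ := fun l s => a l / s ^ 2) h).const_add _).div_const 2
      |>.congr_deriv ?_
    field_simp [hx j]
    ring
  · refine ((hasDerivAt_sum_update (φ := fun _ s => s ^ 2) (hasDerivAt_pow 2 (p j))).add_const
      _).div_const 2 |>.congr_deriv ?_
    ring

theorem hasPartialDerivs_sl2Minus : HasPartialDerivs sl2Minus x p x (fun _ => 0) := fun j =>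
  ⟨((hasDerivAt_sum_update (φ := fun _ s => s ^ 2) (hasDerivAt_pow 2 (x j))).div_const
    2).congr_deriv (by ring), hasDerivAt_const _ _⟩

theorem hasPartialDerivs_sl2Three :
    HasPartialDerivs sl2Three x p (fun j => p j / 2) (fun j => x j / 2) := fun j =>
  ⟨((hasDerivAt_sum_update (φ := fun l s => s * p l) ((hasDerivAt_id _).mul_const _)).div_const
    2).congr_deriv (by simp),
   ((hasDerivAt_sum_update (φ := fun l s => x l * s) ((hasDerivAt_id _).const_mul _)).div_const
    2).congr_deriv (by simp)⟩

end Generators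

theorem sum_single_add_single_mul {ι R : Type*} [Fintype ι] [DecidableEq ι]
    [NonUnitalNonAssocSemiring R] (i k : ι) (A B : R) (g : ι → R) :
    ∑ j, (Pi.single i A + Pi.single k B : ι → R) j * g j = A * g i + B * g k := by
  simp [add_mul, sum_add_distrib, Pi.single_apply]

section PairBrackets

variable {n : ℕ} (a : Fin n → ℝ) {x p : Fin n → ℝ} {i k : Fin n}

theorem pb_pairCasimir_sl2Plus (hik : i ≠ k) (hx : ∀ j, x j ≠ 0) :
    pb n (pairCasimir a i k) (sl2Plus a) x p = 0 := by
  rw [(hasPartialDerivs_pairCasimir a hik (hx i) (hx k)).pb_eq (hasPartialDerivs_sl2Plus a hx),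
    sum_sub_distrib, sum_single_add_single_mul, sum_single_add_single_mul, angularMomentum]
  field_simp [hx i, hx k]
  ring

theorem pb_pairCasimir_sl2Minus (hik : i ≠ k) (hi : x i ≠ 0) (hk : x k ≠ 0) :
    pb n (pairCasimir a i k) sl2Minus x p = 0 := by
  rw [(hasPartialDerivs_pairCasimir a hik hi hk).pb_eq hasPartialDerivs_sl2Minus,
    sum_sub_distrib, sum_single_add_single_mul, sum_single_add_single_mul, angularMomentum]
  ring

theorem pb_pairCasimir_sl2Three (hik : i ≠ k) (hi : x i ≠ 0) (hk : x k ≠ 0) :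
    pb n (pairCasimir a i k) sl2Three x p = 0 := by
  rw [(hasPartialDerivs_pairCasimir a hik hi hk).pb_eq hasPartialDerivs_sl2Three,
    sum_sub_distrib, sum_single_add_single_mul, sum_single_add_single_mul, angularMomentum]
  field_simp
  ring

end PairBrackets

section Casimir

variable {n : ℕ} (a : Fin n → ℝ) (m : ℕ)

theorem CL_eq_sum_pairCasimir : CL n a m = fun x p =>
    -(1 / 4) * (∑ ik ∈ univ.filter (fun ik : Fin n × Fin n => ik.1 < ik.2 ∧ (ik.2 : ℕ) < m),
      pairCasimir a ik.1 ik.2 x p + ∑ i : Fin n, if (i : ℕ) < m then a i else 0) := by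
  funext x p
  rw [CL, sum_filter, ← univ_product_univ, sum_product]
  rfl

theorem pb_CL_eq_zero {g : (Fin n → ℝ) → (Fin n → ℝ) → ℝ} {x p : Fin n → ℝ}
    (hx : ∀ j, x j ≠ 0) (hpair : ∀ i k, i < k → pb n (pairCasimir a i k) g x p = 0) :
    pb n (CL n a m) g x p = 0 := by
  rw [CL_eq_sum_pairCasimir, pb_const_mul_add_const_left, pb_sum_left _ fun ik hik =>
    hasPartialDerivs_pairCasimir a (mem_filter.1 hik).2.1.ne (hx ik.1) (hx ik.2),
    sum_eq_zero fun ik hik => hpair ik.1 ik.2 (mem_filter.1 hik).2.1, mul_zero]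

end Casimir

theorem stmt6_general (n : ℕ) (a : Fin n → ℝ) (m : ℕ)
    (x p : Fin n → ℝ) (hx : ∀ j, x j ≠ 0) :
    pb n (CL n a m)
        (fun x p => ((∑ j, (p j) ^ 2) + ∑ j, a j / (x j) ^ 2) / 2) x p = 0 ∧
    pb n (CL n a m) (fun x _ => (∑ j, (x j) ^ 2) / 2) x p = 0 ∧
    pb n (CL n a m) (fun x p => (∑ j, x j * p j) / 2) x p = 0 :=
  ⟨pb_CL_eq_zero a m hx fun _ _ hik => pb_pairCasimir_sl2Plus a hik.ne hx,
    pb_CL_eq_zero a m hx fun _ _ hik => pb_pairCasimir_sl2Minus a hik.ne (hx _) (hx _),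
    pb_CL_eq_zero a m hx fun _ _ hik => pb_pairCasimir_sl2Three a hik.ne (hx _) (hx _)⟩

theorem stmt6 (n : ℕ) (a : Fin n → ℝ) (m : ℕ) (hm : 2 ≤ m) (hmn : m ≤ n)
    (x p : Fin n → ℝ) (hx : ∀ j, x j ≠ 0) :
    pb n (CL n a m)
        (fun x p => ((∑ j, (p j) ^ 2) + ∑ j, a j / (x j) ^ 2) / 2) x p = 0 ∧
    pb n (CL n a m) (fun x _ => (∑ j, (x j) ^ 2) / 2) x p = 0 ∧
    pb n (CL n a m) (fun x p => (∑ j, x j * p j) / 2) x p = 0 :=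
  stmt6_general n a m x p hx
end

section
/- The left Casimirs are in involution: for all 2 ≤ m ≤ m′ ≤ n, {C^[m], C^[m′]} = 0 with respect to the canonical Poisson bracket on ℝ²ⁿ. -/
/-!
Over the first `m` degrees of freedom put `J₋ = Σ xᵢ²`, `J₊ = Σ (pᵢ² + aᵢ/xᵢ²)` and
`J₃ = Σ xᵢpᵢ`. By Lagrange's identity `C^[m] = -(1/4)(J₋J₊ - J₃²)`. For `m ≤ m'` the `j`-th
summand of `{C^[m], C^[m']}` vanishes unless `j < m`, and then it is
`xⱼpⱼ·α + xⱼ²·β + (pⱼ² + aⱼ/xⱼ²)·γ`, where `α, β, γ` are built from the generators of levels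
`m` and `m'` only. Summing over `j` gives `J₃α + J₋β + J₊γ`, which vanishes identically.
-/

open Finset

open Function Topology

theorem sum_sum_eq_sum_sum_lt_add_sum_diag {ι M : Type*} [Fintype ι] [LinearOrder ι]
    [AddCommMonoid M] (F : ι → ι → M) :
    ∑ i, ∑ j, F i j = ∑ i, ∑ j, (if i < j then F i j + F j i else 0) + ∑ i, F i i := by
  have htri : ∀ i j, F i j =
      (if i < j then F i j else 0) + (if j < i then F i j else 0) + if i = j then F i j else 0 := by
    intro i j
    rcases lt_trichotomy i j with h | rfl | h
    · simp [h, h.ne, h.asymm]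
    · simp
    · simp [h, h.ne', h.asymm]
  conv_lhs => enter [2, i, 2, j]; rw [htri i j]
  simp only [sum_add_distrib, sum_ite_eq, mem_univ, if_true]
  rw [sum_comm (f := fun i j => if j < i then F i j else 0), ← sum_add_distrib]
  simp only [← sum_add_distrib, ite_add_ite, add_zero]

theorem hasDerivAt_sum_apply_update {𝕜 ι F : Type*} [NontriviallyNormedField 𝕜]
    [NormedAddCommGroup F] [NormedSpace 𝕜 F] [Fintype ι] [DecidableEq ι]
    (f : ι → 𝕜 → F) (v : ι → 𝕜) (k : ι) {d : F} (hf : HasDerivAt (f k) d (v k)) :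
    HasDerivAt (fun t => ∑ i, f i (update v k t i)) d (v k) := by
  have h : (fun t => ∑ i, f i (update v k t i)) =
      fun t => f k t + ∑ i ∈ univ.erase k, f i (v i) := by
    funext t
    rw [← add_sum_erase _ _ (mem_univ k), update_self]
    congr 1
    exact sum_congr rfl fun i hi => by rw [update_of_ne (ne_of_mem_erase hi)]
  rw [h]
  exact hf.add_const _

theorem hasDerivAt_ite_zero {𝕜 F : Type*} [NontriviallyNormedField 𝕜] [NormedAddCommGroup F]
    [NormedSpace 𝕜 F] (P : Prop) [Decidable P] {g : 𝕜 → F} {g' : F} {s : 𝕜}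
    (hg : HasDerivAt g g' s) :
    HasDerivAt (fun t => if P then g t else 0) (if P then g' else 0) s := by
  split_ifs
  · exact hg
  · exact hasDerivAt_const s 0

section Generators

variable {n : ℕ} (a : Fin n → ℝ) (m : ℕ) (x p : Fin n → ℝ) (k : Fin n)

noncomputable def jMinus : ℝ := ∑ i : Fin n, if (i : ℕ) < m then x i ^ 2 else 0

noncomputable def jPlus : ℝ := ∑ i : Fin n, if (i : ℕ) < m then p i ^ 2 + a i / x i ^ 2 else 0

noncomputable def jThree : ℝ := ∑ i : Fin n, if (i : ℕ) < m then x i * p i else 0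

theorem CL_eq_of_ne_zero (hx : ∀ j, x j ≠ 0) :
    CL n a m x p = -(1 / 4) * (jMinus m x * jPlus a m x p - jThree m x p ^ 2) := by
  set G : Fin n → Fin n → ℝ := fun i j => if (i : ℕ) < m ∧ (j : ℕ) < m then
    x i ^ 2 * (p j ^ 2 + a j / x j ^ 2) - x i * p i * (x j * p j) else 0
  have hG : jMinus m x * jPlus a m x p - jThree m x p ^ 2 = ∑ i, ∑ j, G i j := by
    rw [sq (jThree m x p)]
    simp only [jMinus, jPlus, jThree, sum_mul_sum, ← sum_sub_distrib]
    refine sum_congr rfl fun i _ => sum_congr rfl fun j _ => ?_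
    by_cases hi : (i : ℕ) < m <;> by_cases hj : (j : ℕ) < m <;> simp [G, hi, hj]
  rw [hG, sum_sum_eq_sum_sum_lt_add_sum_diag, CL]
  congr 2
  · refine sum_congr rfl fun i _ => sum_congr rfl fun j _ => ?_
    by_cases hij : i < j
    · by_cases hj : (j : ℕ) < m
      · have hi : (i : ℕ) < m := lt_trans hij hj
        simp only [G, hij, hi, hj, and_self, if_true]
        field_simp [hx i, hx j]
        ring
      · simp [G, hij, hj]
    · simp [hij]
  · refine sum_congr rfl fun i _ => ?_
    by_cases hi : (i : ℕ) < m
    · simp only [G, hi, and_self, if_true]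
      field_simp [hx i]
      ring
    · simp [G, hi]

theorem hasDerivAt_jMinus_update :
    HasDerivAt (fun t => jMinus m (update x k t)) (if (k : ℕ) < m then 2 * x k else 0) (x k) :=
  hasDerivAt_sum_apply_update (fun (i : Fin n) s => if (i : ℕ) < m then s ^ 2 else 0) x k
    (hasDerivAt_ite_zero _ (by simpa using hasDerivAt_pow 2 (x k)))

theorem hasDerivAt_jPlus_update_x (hk : x k ≠ 0) :
    HasDerivAt (fun t => jPlus a m (update x k t) p)
      (if (k : ℕ) < m then -(2 * a k / x k ^ 3) else 0) (x k) := by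
  refine hasDerivAt_sum_apply_update
    (fun (i : Fin n) s => if (i : ℕ) < m then p i ^ 2 + a i / s ^ 2 else 0) x k
    (hasDerivAt_ite_zero _ ?_)
  have h := (((hasDerivAt_pow 2 (x k)).inv (pow_ne_zero 2 hk)).const_mul (a k)).const_add
    (p k ^ 2)
  refine h.congr_deriv ?_
  field_simp
  ring

theorem hasDerivAt_jPlus_update_p :
    HasDerivAt (fun t => jPlus a m x (update p k t))
      (if (k : ℕ) < m then 2 * p k else 0) (p k) :=
  hasDerivAt_sum_apply_update
    (fun (i : Fin n) s => if (i : ℕ) < m then s ^ 2 + a i / x i ^ 2 else 0) p k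
    (hasDerivAt_ite_zero _ (by simpa using (hasDerivAt_pow 2 (p k)).add_const (a k / x k ^ 2)))

theorem hasDerivAt_jThree_update_x :
    HasDerivAt (fun t => jThree m (update x k t) p) (if (k : ℕ) < m then p k else 0) (x k) :=
  hasDerivAt_sum_apply_update (fun (i : Fin n) s => if (i : ℕ) < m then s * p i else 0) x k
    (hasDerivAt_ite_zero _ (by simpa using (hasDerivAt_id (x k)).mul_const (p k)))

theorem hasDerivAt_jThree_update_p :
    HasDerivAt (fun t => jThree m x (update p k t)) (if (k : ℕ) < m then x k else 0) (p k) :=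
  hasDerivAt_sum_apply_update (fun (i : Fin n) s => if (i : ℕ) < m then x i * s else 0) p k
    (hasDerivAt_ite_zero _ (by simpa using (hasDerivAt_id (p k)).const_mul (x k)))

theorem hasDerivAt_CL_update_x (hx : ∀ j, x j ≠ 0) :
    HasDerivAt (fun t => CL n a m (update x k t) p)
      (if (k : ℕ) < m then
        -(1 / 2) * (x k * jPlus a m x p - a k / x k ^ 3 * jMinus m x - p k * jThree m x p)
      else 0) (x k) := by
  have hne : ∀ᶠ t in 𝓝 (x k), ∀ j, update x k t j ≠ 0 := by
    filter_upwards [eventually_ne_nhds (hx k)] with t ht j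
    rcases eq_or_ne j k with rfl | h
    · simpa using ht
    · simpa [update_of_ne h] using hx j
  have h := (((hasDerivAt_jMinus_update m x k).mul
    (hasDerivAt_jPlus_update_x a m x p k (hx k))).sub
    ((hasDerivAt_jThree_update_x m x p k).pow 2)).const_mul (-(1 / 4) : ℝ)
  refine (h.congr_of_eventuallyEq
    (hne.mono fun t ht => CL_eq_of_ne_zero a m _ p ht)).congr_deriv ?_
  simp only [update_eq_self]
  split_ifs <;> ring

theorem hasDerivAt_CL_update_p (hx : ∀ j, x j ≠ 0) :
    HasDerivAt (fun t => CL n a m x (update p k t))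
      (if (k : ℕ) < m then -(1 / 2) * (p k * jMinus m x - x k * jThree m x p) else 0) (p k) := by
  have h := (((hasDerivAt_jPlus_update_p a m x p k).const_mul (jMinus m x)).sub
    ((hasDerivAt_jThree_update_p m x p k).pow 2)).const_mul (-(1 / 4) : ℝ)
  refine (h.congr_of_eventuallyEq
    (.of_forall fun t => CL_eq_of_ne_zero a m x _ hx)).congr_deriv ?_
  simp only [update_eq_self]
  split_ifs <;> ring

theorem pb_CL_CL_eq {m' : ℕ} (hmm' : m ≤ m') (hx : ∀ j, x j ≠ 0) :
    pb n (CL n a m) (CL n a m') x p =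
      jThree m x p * ((1 / 4) * (jPlus a m x p * jMinus m' x - jMinus m x * jPlus a m' x p)) +
      jMinus m x * ((1 / 4) * (jThree m x p * jPlus a m' x p - jPlus a m x p * jThree m' x p)) +
      jPlus a m x p * ((1 / 4) * (jMinus m x * jThree m' x p - jThree m x p * jMinus m' x)) := by
  simp only [pb, fun j => (hasDerivAt_CL_update_x a m x p j hx).deriv,
    fun j => (hasDerivAt_CL_update_p a m x p j hx).deriv,
    fun j => (hasDerivAt_CL_update_x a m' x p j hx).deriv,
    fun j => (hasDerivAt_CL_update_p a m' x p j hx).deriv]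
  set A := jPlus a m x p
  set B := jMinus m x
  set D := jThree m x p
  set A' := jPlus a m' x p
  set B' := jMinus m' x
  set D' := jThree m' x p
  calc _ = ∑ j : Fin n,
        ((if (j : ℕ) < m then x j * p j else 0) * ((1 / 4) * (A * B' - B * A')) +
        (if (j : ℕ) < m then x j ^ 2 else 0) * ((1 / 4) * (D * A' - A * D')) +
        (if (j : ℕ) < m then p j ^ 2 + a j / x j ^ 2 else 0) *
          ((1 / 4) * (B * D' - D * B'))) := by
        refine sum_congr rfl fun j _ => ?_
        split_ifs with hj hj'
        · field_simp [hx j]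
          ring
        · omega
        all_goals simp
    _ = _ := by simp only [sum_add_distrib, ← sum_mul]; rfl

end Generators

theorem stmt7_general (n : ℕ) (a : Fin n → ℝ) (m m' : ℕ) (hmm' : m ≤ m')
    (x p : Fin n → ℝ) (hx : ∀ j, x j ≠ 0) :
    pb n (CL n a m) (CL n a m') x p = 0 := by
  rw [pb_CL_CL_eq a m x p hmm' hx]
  ring

theorem stmt7 (n : ℕ) (a : Fin n → ℝ) (m m' : ℕ) (hm : 2 ≤ m) (hmm' : m ≤ m')
    (hm'n : m' ≤ n) (x p : Fin n → ℝ) (hx : ∀ j, x j ≠ 0) :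
    pb n (CL n a m) (CL n a m') x p = 0 :=
  stmt7_general n a m m' hmm' x p hx
end
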